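/- In a restriction category with restriction coproducts and restriction zero, decisions can be conjugated by restriction inverses: if h : A → A + A is a decision and f : A → B has restriction inverse g : B → A, then (f + f) ∘ h ∘ g : B → B + B is a decision, and moreover overline{(g+g) h f} = overline{h f}. -/

import Mathlib

open CategoryTheory CategoryTheory.Limits

universe v u

/-- A restriction category: a category with an operation assigning to each
morphism `f : A ⟶ B` a morphism `ρ f : A ⟶ A` satisfying axioms R.1–R.4.
(Composition is written diagrammatically: `f ≫ g` is "first `f`, then `g`",
so the paper's `g ∘ f` is `f ≫ g`.) -/
class RestrictionCategory (C : Type u) [Category.{v} C] where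
  ρ : ∀ {A B : C}, (A ⟶ B) → (A ⟶ A)
  R1 : ∀ {A B : C} (f : A ⟶ B), ρ f ≫ f = f
  R2 : ∀ {A B D : C} (f : A ⟶ B) (g : A ⟶ D), ρ f ≫ ρ g = ρ g ≫ ρ f
  R3 : ∀ {A B D : C} (f : A ⟶ B) (g : A ⟶ D), ρ (ρ f ≫ g) = ρ f ≫ ρ g
  R4 : ∀ {A B D : C} (f : A ⟶ B) (g : B ⟶ D), f ≫ ρ g = ρ (f ≫ g) ≫ f

open RestrictionCategory

open ZeroObject

variable {C : Type u} [Category.{v} C] [RestrictionCategory C]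
  [HasBinaryCoproducts C] [HasZeroObject C] [HasZeroMorphisms C]

/-- The restriction retraction `⟨1|0⟩ : A ⨿ B ⟶ A` of the first injection. -/
noncomputable def iStar (A B : C) : (A ⨿ B) ⟶ A := coprod.desc (𝟙 A) 0

/-- The restriction retraction `⟨0|1⟩ : A ⨿ B ⟶ B` of the second injection. -/
noncomputable def jStar (A B : C) : (A ⨿ B) ⟶ B := coprod.desc 0 (𝟙 B)

/-- `h : A ⟶ A ⨿ A` is a decision for `f : A ⟶ B ⨿ D` if it is restriction
inverse to `⟨overline{i* f} | overline{j* f}⟩ : A ⨿ A ⟶ A` and `ρ h = ρ f`. -/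
def IsDecision {A B D : C} (f : A ⟶ B ⨿ D) (h : A ⟶ A ⨿ A) : Prop :=
  coprod.desc (ρ (f ≫ iStar B D)) (ρ (f ≫ jStar B D)) ≫ h =
    ρ (coprod.desc (ρ (f ≫ iStar B D)) (ρ (f ≫ jStar B D))) ∧
  h ≫ coprod.desc (ρ (f ≫ iStar B D)) (ρ (f ≫ jStar B D)) = ρ h ∧
  ρ h = ρ f

/-! A decision `h` is a restriction inverse of `d = ⟨ρ(h i*)|ρ(h j*)⟩` that sends each of
these two restriction idempotents into the matching injection; from this it commutes with every
restriction idempotent `e`, i.e. `e h = h (e + e)`. For the conjugate `k = g h (f + f)` this gives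
`k (g + g) = g ρ(f) h = g h`, so `k` and `g h` factor through each other and have the same
restriction, and likewise its components `ρ(k i*)`, `ρ(k j*)` are `ρ(g h i*)`, `ρ(g h j*)`.
The cotuple of these is `(g + g) d f`, which is then checked to be restriction inverse to `k`. -/

section Coproduct

variable {C : Type u} [Category.{v} C] [HasBinaryCoproducts C] [HasZeroMorphisms C]

lemma coprod_map_iStar {A A' B B' : C} (u : A ⟶ B) (u' : A' ⟶ B') :
    coprod.map u u' ≫ iStar B B' = iStar A A' ≫ u := by
  apply coprod.hom_ext <;> simp [iStar]

lemma coprod_map_jStar {A A' B B' : C} (u : A ⟶ B) (u' : A' ⟶ B') :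
    coprod.map u u' ≫ jStar B B' = jStar A A' ≫ u' := by
  apply coprod.hom_ext <;> simp [jStar]

end Coproduct

section Restriction

variable {C : Type u} [Category.{v} C] [RestrictionCategory C]

namespace RestrictionCategory

lemma ρ_id (A : C) : ρ (𝟙 A) = 𝟙 A := by
  simpa using R1 (𝟙 A)

lemma ρ_idem {A B : C} (f : A ⟶ B) : ρ (ρ f) = ρ f := by
  simpa [ρ_id] using R3 f (𝟙 A)

lemma ρ_comp_comp_ρ {A B D : C} (f : A ⟶ B) (g : B ⟶ D) : ρ (f ≫ g) ≫ ρ f = ρ (f ≫ g) := by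
  rw [R2, ← R3, ← Category.assoc, R1]

lemma ρ_eq_of_factor {A B D : C} {a : A ⟶ B} {b : A ⟶ D} {x : D ⟶ B} {y : B ⟶ D}
    (ha : a = b ≫ x) (hb : b = a ≫ y) : ρ a = ρ b := by
  have hab : ρ a ≫ ρ b = ρ a := by rw [ha, ρ_comp_comp_ρ]
  have hba : ρ b ≫ ρ a = ρ b := by rw [hb, ρ_comp_comp_ρ]
  rw [← hab, R2, hba]

lemma comp_ρ_of_comp_eq_ρ {A B : C} {f : A ⟶ B} {g : B ⟶ A}
    (hgf : f ≫ g = ρ f) (hfg : g ≫ f = ρ g) : g ≫ ρ f = g := by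
  rw [← hgf, ← Category.assoc, hfg, R1]

lemma comp_ρ_comp_of_comp_eq_ρ {A B X : C} {f : A ⟶ B} {g : B ⟶ A}
    (hfg : g ≫ f = ρ g) (x : A ⟶ X) : g ≫ ρ x ≫ f = ρ (g ≫ x) := by
  rw [← Category.assoc, R4, Category.assoc, hfg, ρ_comp_comp_ρ]

variable [HasBinaryCoproducts C]

lemma ρ_desc {A B D : C} (x : A ⟶ D) (y : B ⟶ D) :
    ρ (coprod.desc x y) = coprod.map (ρ x) (ρ y) := by
  apply coprod.hom_ext
  · rw [R4, coprod.inl_desc, coprod.inl_map]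
  · rw [R4, coprod.inr_desc, coprod.inr_map]

lemma ρ_comp_conj_of_ρ_comp_eq {A B X : C} {h : A ⟶ A ⨿ A} {f : A ⟶ B} {g : B ⟶ A}
    (hgf : f ≫ g = ρ f) (hfg : g ≫ f = ρ g)
    {e : A ⟶ X} {ι : A ⟶ A ⨿ A} {ι' : B ⟶ B ⨿ B}
    (he : ρ e ≫ h = ρ e ≫ ι) (hι : ι ≫ coprod.map f f = f ≫ ι') :
    ρ (g ≫ e) ≫ g ≫ h ≫ coprod.map f f = ρ (g ≫ e) ≫ ι' := by
  rw [← comp_ρ_comp_of_comp_eq_ρ hfg]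
  calc (g ≫ ρ e ≫ f) ≫ g ≫ h ≫ coprod.map f f = g ≫ (ρ e ≫ ρ f) ≫ h ≫ coprod.map f f := by
        simp only [Category.assoc, reassoc_of% hgf]
    _ = g ≫ ρ e ≫ h ≫ coprod.map f f := by
        rw [R2, Category.assoc, reassoc_of% comp_ρ_of_comp_eq_ρ hgf hfg]
    _ = (g ≫ ρ e ≫ f) ≫ ι' := by
        simp only [reassoc_of% he, hι, Category.assoc]

end RestrictionCategory

variable [HasBinaryCoproducts C] [HasZeroMorphisms C]

namespace IsDecision

variable {A : C} {h : A ⟶ A ⨿ A}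

lemma desc_comp (hdec : IsDecision h h) :
    coprod.desc (ρ (h ≫ iStar A A)) (ρ (h ≫ jStar A A)) ≫ h =
      coprod.map (ρ (h ≫ iStar A A)) (ρ (h ≫ jStar A A)) := by
  rw [hdec.1, ρ_desc, ρ_idem, ρ_idem]

lemma ρ_iStar_comp (hdec : IsDecision h h) :
    ρ (h ≫ iStar A A) ≫ h = ρ (h ≫ iStar A A) ≫ coprod.inl := by
  simpa only [coprod.inl_desc_assoc, coprod.inl_map] using coprod.inl ≫= hdec.desc_comp

lemma ρ_jStar_comp (hdec : IsDecision h h) :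
    ρ (h ≫ jStar A A) ≫ h = ρ (h ≫ jStar A A) ≫ coprod.inr := by
  simpa only [coprod.inr_desc_assoc, coprod.inr_map] using coprod.inr ≫= hdec.desc_comp

lemma comp_coprod_map (hdec : IsDecision h h) :
    h ≫ coprod.map (ρ (h ≫ iStar A A)) (ρ (h ≫ jStar A A)) = h := by
  rw [← hdec.desc_comp, ← Category.assoc, hdec.2.1, R1]

lemma ρ_comp {X : C} (hdec : IsDecision h h) (x : A ⟶ X) :
    ρ x ≫ h = h ≫ coprod.map (ρ x) (ρ x) := by
  have hmap : coprod.map (ρ (h ≫ iStar A A) ≫ ρ x) (ρ (h ≫ jStar A A) ≫ ρ x) =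
      coprod.desc (ρ (h ≫ iStar A A)) (ρ (h ≫ jStar A A)) ≫ ρ x ≫ h := by
    apply coprod.hom_ext
    · rw [coprod.inl_map, coprod.inl_desc_assoc, ← Category.assoc, R2]
      simp only [Category.assoc, hdec.ρ_iStar_comp]
    · rw [coprod.inr_map, coprod.inr_desc_assoc, ← Category.assoc, R2]
      simp only [Category.assoc, hdec.ρ_jStar_comp]
  calc ρ x ≫ h = (h ≫ coprod.desc (ρ (h ≫ iStar A A)) (ρ (h ≫ jStar A A))) ≫ ρ x ≫ h := by
        rw [hdec.2.1, ← Category.assoc, R2, Category.assoc, R1]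
    _ = h ≫ coprod.map (ρ (h ≫ iStar A A)) (ρ (h ≫ jStar A A)) ≫ coprod.map (ρ x) (ρ x) := by
        rw [Category.assoc, ← hmap, coprod.map_map]
    _ = h ≫ coprod.map (ρ x) (ρ x) := by rw [← Category.assoc, hdec.comp_coprod_map]

variable {B : C} {f : A ⟶ B} {g : B ⟶ A}

lemma conj_comp_coprod_map (hdec : IsDecision h h) (hgf : f ≫ g = ρ f) (hfg : g ≫ f = ρ g) :
    (g ≫ h ≫ coprod.map f f) ≫ coprod.map g g = g ≫ h := by
  rw [Category.assoc, Category.assoc, coprod.map_map, hgf, ← hdec.ρ_comp, ← Category.assoc,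
    comp_ρ_of_comp_eq_ρ hgf hfg]

lemma ρ_conj (hdec : IsDecision h h) (hgf : f ≫ g = ρ f) (hfg : g ≫ f = ρ g) :
    ρ (g ≫ h ≫ coprod.map f f) = ρ (g ≫ h) :=
  ρ_eq_of_factor (Category.assoc _ _ _).symm (hdec.conj_comp_coprod_map hgf hfg).symm

lemma ρ_conj_comp (hdec : IsDecision h h) (hgf : f ≫ g = ρ f) (hfg : g ≫ f = ρ g)
    {p : A ⨿ A ⟶ A} {q : B ⨿ B ⟶ B}
    (hq : coprod.map f f ≫ q = p ≫ f) (hp : coprod.map g g ≫ p = q ≫ g) :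
    ρ ((g ≫ h ≫ coprod.map f f) ≫ q) = ρ (g ≫ h ≫ p) := by
  refine ρ_eq_of_factor (x := f) (y := g) ?_ ?_
  · simp only [Category.assoc, hq]
  · simpa only [Category.assoc, ← hp] using (hdec.conj_comp_coprod_map hgf hfg =≫ p).symm

lemma desc_ρ_conj (hfg : g ≫ f = ρ g) :
    coprod.desc (ρ (g ≫ h ≫ iStar A A)) (ρ (g ≫ h ≫ jStar A A)) =
      coprod.map g g ≫ coprod.desc (ρ (h ≫ iStar A A)) (ρ (h ≫ jStar A A)) ≫ f := by
  apply coprod.hom_ext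
  · rw [coprod.inl_desc, coprod.inl_map_assoc, coprod.inl_desc_assoc,
      comp_ρ_comp_of_comp_eq_ρ hfg]
  · rw [coprod.inr_desc, coprod.inr_map_assoc, coprod.inr_desc_assoc,
      comp_ρ_comp_of_comp_eq_ρ hfg]

lemma desc_comp_conj (hdec : IsDecision h h) (hgf : f ≫ g = ρ f) (hfg : g ≫ f = ρ g) :
    coprod.desc (ρ (g ≫ h ≫ iStar A A)) (ρ (g ≫ h ≫ jStar A A)) ≫ g ≫ h ≫ coprod.map f f =
      ρ (coprod.desc (ρ (g ≫ h ≫ iStar A A)) (ρ (g ≫ h ≫ jStar A A))) := by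
  rw [ρ_desc, ρ_idem, ρ_idem]
  apply coprod.hom_ext
  · rw [coprod.inl_desc_assoc, coprod.inl_map,
      ρ_comp_conj_of_ρ_comp_eq hgf hfg hdec.ρ_iStar_comp (coprod.inl_map f f)]
  · rw [coprod.inr_desc_assoc, coprod.inr_map,
      ρ_comp_conj_of_ρ_comp_eq hgf hfg hdec.ρ_jStar_comp (coprod.inr_map f f)]

lemma conj_comp_desc (hdec : IsDecision h h) (hgf : f ≫ g = ρ f) (hfg : g ≫ f = ρ g) :
    (g ≫ h ≫ coprod.map f f) ≫ coprod.desc (ρ (g ≫ h ≫ iStar A A)) (ρ (g ≫ h ≫ jStar A A)) =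
      ρ (g ≫ h ≫ coprod.map f f) := by
  rw [desc_ρ_conj hfg, ← Category.assoc, hdec.conj_comp_coprod_map hgf hfg, hdec.ρ_conj hgf hfg,
    Category.assoc, reassoc_of% hdec.2.1, comp_ρ_comp_of_comp_eq_ρ hfg]

end IsDecision

end Restriction

theorem stmt_12_general
    {A B : C} (h : A ⟶ A ⨿ A) (hdec : IsDecision h h)
    (f : A ⟶ B) (g : B ⟶ A)
    (hgf : f ≫ g = ρ f) (hfg : g ≫ f = ρ g) :
    IsDecision (g ≫ h ≫ coprod.map f f) (g ≫ h ≫ coprod.map f f) ∧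
    ρ (g ≫ h ≫ coprod.map f f) = ρ (g ≫ h) := by
  have hi : ρ ((g ≫ h ≫ coprod.map f f) ≫ iStar B B) = ρ (g ≫ h ≫ iStar A A) :=
    hdec.ρ_conj_comp hgf hfg (coprod_map_iStar f f) (coprod_map_iStar g g)
  have hj : ρ ((g ≫ h ≫ coprod.map f f) ≫ jStar B B) = ρ (g ≫ h ≫ jStar A A) :=
    hdec.ρ_conj_comp hgf hfg (coprod_map_jStar f f) (coprod_map_jStar g g)
  refine ⟨⟨?_, ?_, rfl⟩, hdec.ρ_conj hgf hfg⟩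
  · rw [hi, hj]
    exact hdec.desc_comp_conj hgf hfg
  · rw [hi, hj]
    exact hdec.conj_comp_desc hgf hfg

/-- Decisions can be conjugated by restriction inverses: if `h : A ⟶ A ⨿ A`
is a decision and `f : A ⟶ B` has restriction inverse `g : B ⟶ A`, then the
conjugate `(f + f) ∘ h ∘ g : B ⟶ B ⨿ B` is a decision, and moreover
`overline{(f + f) ∘ h ∘ g} = overline{h ∘ g}` (the restriction of the
conjugate of `h` agrees with that of `h` composed with the inverse). -/
theorem stmt_12
    (htot : ∀ A B : C, ρ (coprod.inl : A ⟶ A ⨿ B) = 𝟙 A ∧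
      ρ (coprod.inr : B ⟶ A ⨿ B) = 𝟙 B)
    (hzero : ∀ A : C, ρ (0 : A ⟶ A) = (0 : A ⟶ A))
    {A B : C} (h : A ⟶ A ⨿ A) (hdec : IsDecision h h)
    (f : A ⟶ B) (g : B ⟶ A)
    (hgf : f ≫ g = ρ f) (hfg : g ≫ f = ρ g) :
    IsDecision (g ≫ h ≫ coprod.map f f) (g ≫ h ≫ coprod.map f f) ∧
    ρ (g ≫ h ≫ coprod.map f f) = ρ (g ≫ h) :=
  stmt_12_general h hdec f g hgf hfg
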